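/- arXiv:2008.12662 — 7 statements merged into one kernel-verified Lean document; each statement's English description precedes it below -/
import Mathlib

section
/- Let J be a random variable taking values in the nonnegative integers with E[J] < ∞, let ξ be a Bernoulli(1/2) random variable independent of J, and set J̃ = J − ξ. Let m̃ be the smallest integer median of J̃. Then B(J) = E|J̃ − m̃| + P(J > 0) − 1/2, where B(J) = Σ_{j≥1} min{P(J ≥ j), P(J ≤ j)}. -/
/-!
Write `T n = P(J > n)`. Since `ξ` is a fair coin independent of `J`, the tail of `J̃` is the
average `P(J̃ > n) = (T n + T (n + 1)) / 2`. For an integer median `m` of an integer random variable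
`X`, the layer-cake formula reads `E|X - m| = Σ_{n ∈ ℤ} min (P(X ≤ n)) (P(X > n))`: each `n` is
counted with `P(X > n)` when `n ≥ m` and with `P(X ≤ n)` when `n < m`, and the median property
says this is the smaller of the two. Finally `min (T j) (1 - T (j + 1))` differs from
`min (P(J̃ ≤ j)) (P(J̃ > j))` by exactly `(T j - T (j + 1)) / 2`; these corrections telescope to
`T 0 / 2`, while the terms `n < 0` of the sum over `ℤ` contribute `(1 - T 0) / 2`.
-/

open MeasureTheory ProbabilityTheory
open scoped ENNReal

lemma min_eq_min_avg_add (x y : ℝ) :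
    min x (1 - y) = min (1 - (x + y) / 2) ((x + y) / 2) + (x - y) / 2 := by
  rcases le_total (x + y) 1 with h | h
  · rw [min_eq_left (by linarith), min_eq_right (by linarith)]; ring
  · rw [min_eq_right (by linarith), min_eq_left (by linarith)]; ring

lemma tsum_sub_succ {f : ℕ → ℝ} (hf : Summable f) : ∑' k, (f k - f (k + 1)) = f 0 := by
  rw [hf.tsum_sub ((summable_nat_add_iff 1).2 hf), hf.tsum_eq_zero_add]; ring

lemma tsum_min_tail_eq_tsum_min_avg {T : ℤ → ℝ} (hT0 : ∀ n, 0 ≤ T n) (hT1 : ∀ n, T n ≤ 1)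
    (hneg : ∀ n < 0, T n = 1) (hT : Summable fun k : ℕ => T k) :
    ∑' j : ℕ, min (T j) (1 - T (j + 1)) =
      ∑' n : ℤ, min (1 - (T n + T (n + 1)) / 2) ((T n + T (n + 1)) / 2) + T 0 - 1 / 2 := by
  set c : ℤ → ℝ := fun n => min (1 - (T n + T (n + 1)) / 2) ((T n + T (n + 1)) / 2)
  have hT_succ : Summable fun k : ℕ => T (k + 1) :=
    ((summable_nat_add_iff 1).2 hT).congr fun k => by push_cast; rfl
  have hc : Summable fun k : ℕ => c k :=
    .of_nonneg_of_le (fun k => le_min (by linarith [hT1 k, hT1 (k + 1)])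
      (by linarith [hT0 k, hT0 (k + 1)])) (fun k => min_le_right _ _) ((hT.add hT_succ).div_const 2)
  have hc_neg : ∀ k : ℕ, c (-(k + 1)) = if k = 0 then (1 - T 0) / 2 else 0 := by
    intro k
    split_ifs with hk
    · simp only [c, hk, CharP.cast_eq_zero, zero_add, neg_add_cancel, hneg (-1) (by norm_num)]
      rw [min_eq_left (by linarith [hT0 0])]
      ring
    · simp only [c, hneg (-(k + 1)) (by omega), hneg (-(k + 1) + 1) (by omega)]
      norm_num
  have hsplit : ∑' j : ℕ, min (T j) (1 - T (j + 1)) = ∑' k : ℕ, c k + T 0 / 2 := by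
    simp_rw [min_eq_min_avg_add]
    rw [hc.tsum_add ((hT.sub hT_succ).div_const 2), tsum_div_const]
    congr 2
    exact (tsum_congr fun k => by push_cast; rfl).trans (tsum_sub_succ (f := fun k : ℕ => T k) hT)
  rw [tsum_of_nat_of_neg_add_one hc, tsum_congr hc_neg, tsum_ite_eq, hsplit]
  · ring
  · exact (hasSum_ite_eq 0 _).summable.congr fun k => (hc_neg k).symm

section

variable {Ω : Type*} [MeasurableSpace Ω] {μ : Measure Ω}

lemma natAbs_sub_eq_tsum_ite (x m : ℤ) :
    ((x - m).natAbs : ℝ≥0∞) = ∑' n : ℤ, if (if m ≤ n then n < x else x ≤ n) then 1 else 0 := by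
  have hIco : ∀ n, (if m ≤ n then n < x else x ≤ n) ↔ n ∈ Finset.Ico (min x m) (max x m) := by
    intro n; simp only [Finset.mem_Ico]; split_ifs <;> omega
  simp_rw [hIco]
  rw [tsum_eq_sum (s := Finset.Ico (min x m) (max x m)) (by simp_all), Finset.sum_boole,
    Finset.filter_mem_eq_inter, Finset.inter_self, Int.card_Ico]
  norm_cast
  omega

lemma lintegral_natAbs_sub_eq_tsum {X : Ω → ℤ} (hX : Measurable X) (m : ℤ) :
    ∫⁻ ω, ((X ω - m).natAbs : ℝ≥0∞) ∂μ =
      ∑' n : ℤ, μ (if m ≤ n then {ω | n < X ω} else {ω | X ω ≤ n}) := by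
  have hS : ∀ n : ℤ, MeasurableSet (if m ≤ n then {ω | n < X ω} else {ω | X ω ≤ n}) := by
    intro n; split_ifs
    exacts [hX measurableSet_Ioi, hX measurableSet_Iic]
  simp_rw [natAbs_sub_eq_tsum_ite, ← lintegral_indicator_one (hS _)]
  rw [← lintegral_tsum fun n => (measurable_one.indicator (hS n)).aemeasurable]
  refine lintegral_congr fun ω => tsum_congr fun n => ?_
  split_ifs <;> simp_all

lemma summable_measureReal_lt_of_integrable {N : Ω → ℕ} (hN : Measurable N)
    (hint : Integrable (fun ω => (N ω : ℝ)) μ) : Summable fun k : ℕ => μ.real {ω | k < N ω} := by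
  have hlayer := lintegral_natAbs_sub_eq_tsum (μ := μ) (X := fun ω => (N ω : ℤ)) (by fun_prop) 0
  have hfin : ∫⁻ ω, (((N ω : ℤ) - 0).natAbs : ℝ≥0∞) ∂μ ≠ ⊤ := by
    simpa using hint.hasFiniteIntegral.ne
  rw [hlayer] at hfin
  refine ((ENNReal.summable_toReal hfin).comp_injective Nat.cast_injective).congr fun k => ?_
  simp [measureReal_def]

variable [IsProbabilityMeasure μ]

lemma measureReal_lt_eq_one_sub {X : Ω → ℤ} (hX : Measurable X) (n : ℤ) :
    μ.real {ω | n < X ω} = 1 - μ.real {ω | X ω ≤ n} := by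
  rw [← probReal_compl_eq_one_sub (s := {ω | X ω ≤ n}) (hX measurableSet_Iic)]
  congr 1; ext ω; simp

lemma measureReal_ite_eq_min_of_median {X : Ω → ℤ} (hX : Measurable X) {m : ℤ}
    (hm_le : 1 / 2 ≤ μ.real {ω | X ω ≤ m}) (hm_ge : 1 / 2 ≤ μ.real {ω | m ≤ X ω}) (n : ℤ) :
    μ.real (if m ≤ n then {ω | n < X ω} else {ω | X ω ≤ n}) =
      min (μ.real {ω | X ω ≤ n}) (μ.real {ω | n < X ω}) := by
  have hcompl := measureReal_lt_eq_one_sub (μ := μ) hX n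
  split_ifs with h
  · have : μ.real {ω | X ω ≤ m} ≤ μ.real {ω | X ω ≤ n} :=
      measureReal_mono fun ω (hω : X ω ≤ m) => hω.trans h
    exact (min_eq_right (by linarith)).symm
  · have : μ.real {ω | m ≤ X ω} ≤ μ.real {ω | n < X ω} :=
      measureReal_mono fun ω (hω : m ≤ X ω) => by simp only [Set.mem_ofPred_eq]; omega
    exact (min_eq_left (by linarith)).symm

theorem integral_abs_sub_median_eq_tsum {X : Ω → ℤ} (hX : Measurable X) {m : ℤ}
    (hm_le : 1 / 2 ≤ μ.real {ω | X ω ≤ m}) (hm_ge : 1 / 2 ≤ μ.real {ω | m ≤ X ω}) :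
    ∫ ω, |(X ω : ℝ) - m| ∂μ = ∑' n : ℤ, min (μ.real {ω | X ω ≤ n}) (μ.real {ω | n < X ω}) := by
  have habs : ∀ ω, ENNReal.ofReal |(X ω : ℝ) - m| = ((X ω - m).natAbs : ℝ≥0∞) := by
    intro ω
    rw [← Int.cast_sub, ← Int.cast_abs, ← Nat.cast_natAbs, ENNReal.ofReal_natCast]
  rw [integral_eq_lintegral_of_nonneg_ae (ae_of_all _ fun ω => abs_nonneg _) (by fun_prop),
    lintegral_congr habs, lintegral_natAbs_sub_eq_tsum hX m,
    ENNReal.tsum_toReal_eq fun _ => measure_ne_top _ _]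
  exact tsum_congr (measureReal_ite_eq_min_of_median hX hm_le hm_ge)

lemma measureReal_sub_indep_fair_coin {X : Ω → ℤ} {ξ : Ω → ℕ} (hX : Measurable X) (hξ : Measurable ξ)
    (hindep : IndepFun X ξ μ) (hξ0 : μ.real {ω | ξ ω = 0} = 1 / 2)
    (hξ1 : μ.real {ω | ξ ω = 1} = 1 / 2) (S : Set ℤ) :
    μ.real {ω | X ω - ξ ω ∈ S} = (μ.real {ω | X ω ∈ S} + μ.real {ω | X ω - 1 ∈ S}) / 2 := by
  have hmeas : ∀ i : ℕ, MeasurableSet {ω | ξ ω = i} := fun i => hξ (measurableSet_singleton i)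
  have hdisj : Disjoint {ω | ξ ω = 0} {ω | ξ ω = 1} :=
    Set.disjoint_left.2 fun ω (h0 : ξ ω = 0) (h1 : ξ ω = 1) => by omega
  have hconull : μ ({ω | ξ ω = 0} ∪ {ω | ξ ω = 1})ᶜ = 0 := by
    rw [prob_compl_eq_zero_iff ((hmeas 0).union (hmeas 1)), ← ENNReal.toReal_eq_one_iff,
      ← measureReal_def, measureReal_union hdisj (hmeas 1), hξ0, hξ1]
    norm_num
  have hindep_real : ∀ (T : Set ℤ) (i : ℕ),
      μ.real (X ⁻¹' T ∩ ξ ⁻¹' {i}) = μ.real (X ⁻¹' T) * μ.real {ω | ξ ω = i} := by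
    intro T i
    rw [measureReal_def, hindep.measure_inter_preimage_eq_mul _ _ (.of_discrete)
      (measurableSet_singleton i), ENNReal.toReal_mul]
    rfl
  have h0 : {ω | X ω - ξ ω ∈ S} ∩ {ω | ξ ω = 0} = X ⁻¹' S ∩ ξ ⁻¹' {0} := by
    ext ω; constructor <;> rintro ⟨h, h' : ξ ω = 0⟩ <;> simp_all
  have h1 : {ω | X ω - ξ ω ∈ S} ∩ {ω | ξ ω = 1} = X ⁻¹' ((· - 1) ⁻¹' S) ∩ ξ ⁻¹' {1} := by
    ext ω; constructor <;> rintro ⟨h, h' : ξ ω = 1⟩ <;> simp_all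
  rw [measureReal_def, ← measure_inter_conull hconull, ← measureReal_def,
    Set.inter_union_distrib_left, h0, h1,
    measureReal_union ?_ ((hX .of_discrete).inter (hξ (measurableSet_singleton 1))),
    hindep_real, hindep_real, hξ0, hξ1]
  · simp only [Set.preimage, Set.mem_ofPred_eq]
    ring
  · exact hdisj.mono Set.inter_subset_right Set.inter_subset_right

lemma measureReal_lt_sub_indep_fair_coin {X : Ω → ℤ} {ξ : Ω → ℕ} (hX : Measurable X)
    (hξ : Measurable ξ) (hindep : IndepFun X ξ μ) (hξ0 : μ.real {ω | ξ ω = 0} = 1 / 2)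
    (hξ1 : μ.real {ω | ξ ω = 1} = 1 / 2) (n : ℤ) :
    μ.real {ω | n < X ω - ξ ω} = (μ.real {ω | n < X ω} + μ.real {ω | n + 1 < X ω}) / 2 := by
  have hIoi := measureReal_sub_indep_fair_coin hX hξ hindep hξ0 hξ1 (Set.Ioi n)
  simp only [Set.mem_Ioi] at hIoi
  rw [hIoi]
  congr 3; ext ω; simp only [Set.mem_ofPred_eq]; omega

end

/-- Let `J` be a nonnegative-integer-valued random variable with finite
expectation, `ξ` a Bernoulli(1/2) random variable independent of `J`, and `J̃ = J − ξ`.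
If `m̃` is the smallest integer median of `J̃`, then
`B(J) = Σ_{j≥1} min{P(J ≥ j), P(J ≤ j)} = E|J̃ − m̃| + P(J > 0) − 1/2`. -/
theorem stmt_0 {Ω : Type*} [MeasurableSpace Ω] (μ : Measure Ω) [IsProbabilityMeasure μ]
    (J : Ω → ℕ) (hJmeas : Measurable J)
    (hJint : Integrable (fun ω => (J ω : ℝ)) μ)
    (ξ : Ω → ℕ) (hξmeas : Measurable ξ)
    (hξ0 : (μ {ω | ξ ω = 0}).toReal = 1 / 2) (hξ1 : (μ {ω | ξ ω = 1}).toReal = 1 / 2)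
    (hindep : IndepFun J ξ μ)
    (Jt : Ω → ℤ) (hJt : ∀ ω, Jt ω = (J ω : ℤ) - (ξ ω : ℤ))
    (mt : ℤ)
    (hmt : IsLeast {m : ℤ | (μ {ω | Jt ω ≤ m}).toReal ≥ 1 / 2 ∧
            (μ {ω | m ≤ Jt ω}).toReal ≥ 1 / 2} mt) :
    (∑' j : ℕ, min (μ {ω | j + 1 ≤ J ω}).toReal (μ {ω | J ω ≤ j + 1}).toReal)
      = (∫ ω, |(Jt ω : ℝ) - (mt : ℝ)| ∂μ) + (μ {ω | 0 < J ω}).toReal - 1 / 2 := by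
  have hJ : Measurable fun ω => (J ω : ℤ) := by fun_prop
  have hJt_meas : Measurable Jt := by
    rw [funext hJt]; fun_prop
  set T : ℤ → ℝ := fun n => μ.real {ω | n < (J ω : ℤ)} with hT
  have hlaw : ∀ n : ℤ, μ.real {ω | n < Jt ω} = (T n + T (n + 1)) / 2 := by
    intro n
    simpa only [hJt] using measureReal_lt_sub_indep_fair_coin hJ hξmeas
      (hindep.comp measurable_from_top measurable_id) hξ0 hξ1 n
  have hcdf : ∀ n : ℤ, μ.real {ω | Jt ω ≤ n} = 1 - (T n + T (n + 1)) / 2 := by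
    intro n; rw [← hlaw, measureReal_lt_eq_one_sub hJt_meas]; ring
  have hB : ∀ j : ℕ, min (μ {ω | j + 1 ≤ J ω}).toReal (μ {ω | J ω ≤ j + 1}).toReal =
      min (T j) (1 - T (j + 1)) := by
    intro j
    simp only [hT, ← measureReal_def]
    rw [measureReal_lt_eq_one_sub hJ ((j : ℤ) + 1), sub_sub_cancel]
    congr 2 <;> ext ω <;> simp only [Set.mem_ofPred_eq] <;> omega
  have hP : (μ {ω | 0 < J ω}).toReal = T 0 := by
    simp only [hT, ← measureReal_def]; congr 1; ext ω; simp only [Set.mem_ofPred_eq]; omega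
  have hT_neg : ∀ n < 0, T n = 1 := by
    intro n hn
    simp only [hT]
    rw [← probReal_univ (μ := μ)]
    congr 1; ext ω; simp only [Set.mem_ofPred_eq, Set.mem_univ, iff_true]; omega
  have hT_summable : Summable fun k : ℕ => T k :=
    (summable_measureReal_lt_of_integrable hJmeas hJint).congr fun k => by simp [hT]
  rw [integral_abs_sub_median_eq_tsum hJt_meas hmt.1.1 hmt.1.2, tsum_congr hB, hP]
  simp_rw [hcdf, hlaw]
  exact tsum_min_tail_eq_tsum_min_avg (fun _ => measureReal_nonneg) (fun _ => measureReal_le_one)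
    hT_neg hT_summable
end

section
/- Let J be a random variable taking values in the nonnegative integers with E[J] < ∞, and let m be the smallest integer median of J. Then B(J) = E|J − m| + P(J > 0) − max{P(J > m), P(J < m)}, where B(J) = Σ_{j≥1} min{P(J ≥ j), P(J ≤ j)}. -/
/-!
Write `F j = P(J ≤ j)` and `G j = P(J ≥ j)`. Minimality of the median `m` gives
`min (G j) (F j) = F j` for `j < m` and `= G j` for `j > m`. Since `|J - m|` counts the integers
`j ≠ m` with `J ≤ j < m` or `m < j ≤ J`, `E|J - m| = Σ_{j<m} F j + Σ_{j>m} G j`, hence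
`Σ_{j≥0} min (G j) (F j) = E|J - m| + min (G m) (F m)`. Dropping the term `min (G 0) (F 0) = F 0`
and using `P(J > n) = 1 - F n`, `P(J < n) = 1 - G n` gives the formula.
-/

open MeasureTheory ProbabilityTheory

theorem tsum_ite_between_eq_ofReal_abs_sub (a m : ℕ) :
    ∑' j : ℕ, (if a ≤ j ∧ j < m ∨ m < j ∧ j ≤ a then (1 : ENNReal) else 0)
      = ENNReal.ofReal |(a : ℝ) - m| := by
  set s := Finset.Ico a m ∪ Finset.Ioc m a
  have hmem (j : ℕ) : j ∈ s ↔ a ≤ j ∧ j < m ∨ m < j ∧ j ≤ a := by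
    simp only [s, Finset.mem_union, Finset.mem_Ico, Finset.mem_Ioc]
  have hdisj : Disjoint (Finset.Ico a m) (Finset.Ioc m a) :=
    Finset.disjoint_left.2 fun j h₁ h₂ => by
      simp only [Finset.mem_Ico, Finset.mem_Ioc] at h₁ h₂; omega
  have hcard : (s.card : ℝ) = |(a : ℝ) - m| := by
    rw [Finset.card_union_of_disjoint hdisj, Nat.card_Ico, Nat.card_Ioc]
    rcases le_total a m with h | h <;> simp [h, abs_of_nonneg, abs_of_nonpos, Nat.cast_sub]
  rw [tsum_eq_sum (s := s) fun j hj => if_neg ((hmem j).not.1 hj), Finset.sum_boole,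
    Finset.filter_true_of_mem fun j hj => (hmem j).1 hj, ← hcard, ENNReal.ofReal_natCast]

section

variable {Ω : Type*} [MeasurableSpace Ω] {μ : Measure Ω}

theorem lintegral_tsum_indicator_one {ι : Type*} [Countable ι] {A : ι → Set Ω}
    (hA : ∀ i, MeasurableSet (A i)) :
    ∫⁻ ω, ∑' i, (A i).indicator 1 ω ∂μ = ∑' i, μ (A i) := by
  rw [lintegral_tsum (f := fun i => (A i).indicator 1)
    fun i => (measurable_const.indicator (hA i)).aemeasurable]
  simp_rw [lintegral_indicator_one (hA _)]

theorem hasSum_measureReal_between_integral_abs_sub [IsFiniteMeasure μ] {X : Ω → ℕ}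
    (hX : Measurable X) (hint : Integrable (fun ω => (X ω : ℝ)) μ) (m : ℕ) :
    HasSum (fun j => μ.real {ω | X ω ≤ j ∧ j < m ∨ m < j ∧ j ≤ X ω})
      (∫ ω, |(X ω : ℝ) - m| ∂μ) := by
  have hA (j : ℕ) : MeasurableSet {ω | X ω ≤ j ∧ j < m ∨ m < j ∧ j ≤ X ω} :=
    hX (MeasurableSet.of_discrete (s := {n | n ≤ j ∧ j < m ∨ m < j ∧ j ≤ n}))
  have hint' : Integrable (fun ω => |(X ω : ℝ) - m|) μ := (hint.sub (integrable_const _)).abs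
  have hlint : ∫⁻ ω, ENNReal.ofReal |(X ω : ℝ) - m| ∂μ
      = ∑' j : ℕ, μ {ω | X ω ≤ j ∧ j < m ∨ m < j ∧ j ≤ X ω} := by
    simp_rw [← tsum_ite_between_eq_ofReal_abs_sub, ← lintegral_tsum_indicator_one hA,
      Set.indicator_apply, Set.mem_ofPred_eq, Pi.one_apply]
  have hfin := hlint ▸ hint'.lintegral_lt_top.ne
  rw [integral_eq_lintegral_of_nonneg_ae (ae_of_all _ fun _ => abs_nonneg _)
    hint'.aestronglyMeasurable, hlint, ENNReal.tsum_toReal_eq fun _ => measure_ne_top _ _]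
  exact (ENNReal.summable_toReal hfin).hasSum

abbrev IsLeastMedian (μ : Measure Ω) (J : Ω → ℕ) (m : ℕ) : Prop :=
  IsLeast {n : ℕ | μ.real {ω | J ω ≤ n} ≥ 1 / 2 ∧ μ.real {ω | n ≤ J ω} ≥ 1 / 2} m

variable [IsProbabilityMeasure μ] {J : Ω → ℕ} {m : ℕ}

theorem measureReal_gt_eq_one_sub_measureReal_le (hJ : Measurable J) (n : ℕ) :
    μ.real {ω | n < J ω} = 1 - μ.real {ω | J ω ≤ n} := by
  have hs : MeasurableSet {ω | J ω ≤ n} := hJ measurableSet_Iic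
  rw [← probReal_compl_eq_one_sub hs]
  simp only [Set.compl_ofPred, not_le]

theorem measureReal_lt_eq_one_sub_measureReal_ge (hJ : Measurable J) (n : ℕ) :
    μ.real {ω | J ω < n} = 1 - μ.real {ω | n ≤ J ω} := by
  have hs : MeasurableSet {ω | n ≤ J ω} := hJ measurableSet_Ici
  rw [← probReal_compl_eq_one_sub hs]
  simp only [Set.compl_ofPred, not_le]

theorem min_measureReal_eq_of_lt_median (hm : IsLeastMedian μ J m) {j : ℕ} (hj : j < m) :
    min (μ.real {ω | j ≤ J ω}) (μ.real {ω | J ω ≤ j}) = μ.real {ω | J ω ≤ j} := by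
  have hG : 1 / 2 ≤ μ.real {ω | j ≤ J ω} :=
    hm.1.2.trans (measureReal_mono fun ω (h : m ≤ J ω) => hj.le.trans h)
  have hF : μ.real {ω | J ω ≤ j} < 1 / 2 := by
    by_contra! h
    exact hj.not_ge (hm.2 ⟨h, hG⟩)
  exact min_eq_right (by linarith)

theorem min_measureReal_eq_of_median_lt (hJ : Measurable J) (hm : IsLeastMedian μ J m)
    {j : ℕ} (hj : m < j) :
    min (μ.real {ω | j ≤ J ω}) (μ.real {ω | J ω ≤ j}) = μ.real {ω | j ≤ J ω} := by
  have hG : μ.real {ω | j ≤ J ω} ≤ μ.real {ω | m < J ω} :=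
    measureReal_mono fun ω (h : j ≤ J ω) => hj.trans_le h
  have hF : μ.real {ω | J ω ≤ m} ≤ μ.real {ω | J ω ≤ j} :=
    measureReal_mono fun ω (h : J ω ≤ m) => h.trans hj.le
  rw [measureReal_gt_eq_one_sub_measureReal_le hJ] at hG
  exact min_eq_left (by linarith [hm.1.1])

theorem hasSum_min_measureReal (hJ : Measurable J) (hint : Integrable (fun ω => (J ω : ℝ)) μ)
    (hm : IsLeastMedian μ J m) :
    HasSum (fun j => min (μ.real {ω | j ≤ J ω}) (μ.real {ω | J ω ≤ j}))
      ((∫ ω, |(J ω : ℝ) - m| ∂μ)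
        + min (μ.real {ω | m ≤ J ω}) (μ.real {ω | J ω ≤ m})) := by
  convert (hasSum_measureReal_between_integral_abs_sub hJ hint m).add
    (hasSum_ite_eq m (min (μ.real {ω | m ≤ J ω}) (μ.real {ω | J ω ≤ m}))) using 2 with j
  rcases lt_trichotomy j m with hj | rfl | hj
  · rw [min_measureReal_eq_of_lt_median hm hj, if_neg hj.ne, add_zero]
    congr 1; ext ω; simp only [Set.mem_ofPred_eq]; omega
  · simp
  · rw [min_measureReal_eq_of_median_lt hJ hm hj, if_neg hj.ne', add_zero]
    congr 1; ext ω; simp only [Set.mem_ofPred_eq]; omega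

end

/-- Let `J` be a nonnegative-integer-valued random variable with finite
expectation and let `m` be the smallest integer median of `J`.  Then
`B(J) = Σ_{j≥1} min{P(J ≥ j), P(J ≤ j)}
      = E|J − m| + P(J > 0) − max{P(J > m), P(J < m)}`. -/
theorem stmt_1 {Ω : Type*} [MeasurableSpace Ω] (μ : Measure Ω) [IsProbabilityMeasure μ]
    (J : Ω → ℕ) (hJmeas : Measurable J)
    (hJint : Integrable (fun ω => (J ω : ℝ)) μ)
    (m : ℕ)
    (hm : IsLeast {n : ℕ | (μ {ω | J ω ≤ n}).toReal ≥ 1 / 2 ∧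
            (μ {ω | n ≤ J ω}).toReal ≥ 1 / 2} m) :
    (∑' j : ℕ, min (μ {ω | j + 1 ≤ J ω}).toReal (μ {ω | J ω ≤ j + 1}).toReal)
      = (∫ ω, |(J ω : ℝ) - (m : ℝ)| ∂μ) + (μ {ω | 0 < J ω}).toReal
        - max (μ {ω | m < J ω}).toReal (μ {ω | J ω < m}).toReal := by
  simp only [← measureReal_def] at hm ⊢
  have hsum := (hasSum_nat_add_iff' 1).2 (hasSum_min_measureReal hJmeas hJint hm)
  have hG₀ : μ.real {ω | 0 ≤ J ω} = 1 := by simp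
  rw [hsum.tsum_eq, Finset.sum_range_one, hG₀, min_eq_right measureReal_le_one,
    measureReal_gt_eq_one_sub_measureReal_le hJmeas,
    measureReal_gt_eq_one_sub_measureReal_le hJmeas,
    measureReal_lt_eq_one_sub_measureReal_ge hJmeas, max_sub_sub_left, min_comm]
  ring
end

section
/- Let τ be a random variable taking integer values with τ ≥ L almost surely, where L ≥ 1 and k ≥ 0 are integers, and define J = max{0, ⌈(τ − L − k)/L⌉}. If E[J] < ∞, then B(J) = 0.5·Σ_{j≥1} [1 − |P(τ > k + (j+1)L) + P(τ > k + jL) − 1|] + 0.5·P(τ > k + L), where B(J) = Σ_{j≥1} min{P(J ≥ j), P(J ≤ j)}. -/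
open MeasureTheory ProbabilityTheory

/-!
Write `a j = P(τ > k + (j+1)L)`. Since `J ≥ j + 1 ↔ τ > k + (j+1)L`, the `j`-th term of `B(J)`
is `min (a j) (1 - a (j+1))`, and `min x (1 - y) = ½(1 - |x + y - 1|) + ½(x - y)`.
Summing, the second part telescopes to `½ a 0`; everything converges because `∑ a j ≤ E[J]`.
-/

theorem abs_one_sub_abs_sub_one_le (s : ℝ) : |(1 - |s - 1|)| ≤ |s| := by
  simpa [abs_sub_comm] using abs_abs_sub_abs_le (s - 1) (-1)

theorem min_one_sub_eq (x y : ℝ) :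
    min x (1 - y) = 0.5 * (1 - |y + x - 1|) + 0.5 * (x - y) := by
  rcases le_total x (1 - y) with h | h
  · rw [min_eq_left h, abs_of_nonpos (by linarith)]; ring
  · rw [min_eq_right h, abs_of_nonneg (by linarith)]; ring

theorem Summable.tsum_sub_succ {G : Type*} [AddCommGroup G] [TopologicalSpace G]
    [IsTopologicalAddGroup G] [T2Space G] {a : ℕ → G} (ha : Summable a) :
    ∑' j, (a j - a (j + 1)) = a 0 := by
  rw [ha.tsum_sub ((summable_nat_add_iff 1).2 ha), ha.tsum_eq_zero_add, add_sub_cancel_right]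

theorem tsum_min_one_sub_succ {a : ℕ → ℝ} (ha : Summable a) :
    ∑' j, min (a j) (1 - a (j + 1))
      = 0.5 * ∑' j, (1 - |a (j + 1) + a j - 1|) + 0.5 * a 0 := by
  have ha' : Summable fun j => a (j + 1) := (summable_nat_add_iff 1).2 ha
  have hg : Summable fun j => 1 - |a (j + 1) + a j - 1| :=
    (ha'.add ha).abs.of_norm_bounded fun j => abs_one_sub_abs_sub_one_le _
  simp_rw [min_one_sub_eq]
  rw [(hg.mul_left 0.5).tsum_add ((ha.sub ha').mul_left 0.5), tsum_mul_left, tsum_mul_left,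
    ha.tsum_sub_succ]

theorem le_max_zero_ceil_iff {L k n t : ℤ} (hL : 0 < L) (hn : 1 ≤ n) :
    n ≤ max 0 ⌈((t : ℝ) - L - k) / L⌉ ↔ k + n * L < t := by
  have key : ((n : ℝ) - 1) * L < t - L - k ↔ k + n * L < t := by
    rw [← Int.cast_lt (R := ℝ)]; push_cast; constructor <;> intro h <;> linarith
  rw [le_max_iff, Int.le_ceil_iff, lt_div_iff₀ (by exact_mod_cast hL), key,
    or_iff_right (not_le.2 hn)]

theorem max_zero_ceil_le_iff {L k n t : ℤ} (hL : 0 < L) (hn : 0 ≤ n) :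
    max 0 ⌈((t : ℝ) - L - k) / L⌉ ≤ n ↔ t ≤ k + (n + 1) * L := by
  have key : ((t : ℝ) - L - k) ≤ n * L ↔ t ≤ k + (n + 1) * L := by
    rw [← Int.cast_le (R := ℝ)]; push_cast; constructor <;> intro h <;> linarith
  rw [max_le_iff, Int.ceil_le, div_le_iff₀ (by exact_mod_cast hL), key, and_iff_right hn]

theorem summable_measure_add_one_le {Ω : Type*} [MeasurableSpace Ω] {μ : Measure Ω}
    [IsProbabilityMeasure μ] {J : Ω → ℤ} (hJ : Integrable (fun ω => (J ω : ℝ)) μ)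
    (hJ0 : ∀ ω, 0 ≤ J ω) :
    Summable fun j : ℕ => (μ {ω | (j : ℤ) + 1 ≤ J ω}).toReal := by
  let : MeasureSpace Ω := ⟨μ⟩
  refine (ENNReal.summable_toReal
    (tsum_prob_mem_Ioi_lt_top hJ fun ω => Int.cast_nonneg_iff.2 (hJ0 ω)).ne).congr fun j => ?_
  show (μ _).toReal = _
  congr 2
  ext ω
  simp only [Set.mem_ofPred_eq, Set.mem_Ioi, Int.add_one_le_iff]
  norm_cast

theorem stmt_2_general {Ω : Type*} [MeasurableSpace Ω] (μ : Measure Ω) [IsProbabilityMeasure μ]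
    (τ : Ω → ℤ) (hτmeas : Measurable τ)
    (L k : ℤ) (hL : 1 ≤ L)
    (J : Ω → ℤ)
    (hJ : ∀ ω, J ω = max 0 ⌈((τ ω : ℝ) - (L : ℝ) - (k : ℝ)) / (L : ℝ)⌉)
    (hJint : Integrable (fun ω => (J ω : ℝ)) μ) :
    (∑' j : ℕ, min (μ {ω | (j : ℤ) + 1 ≤ J ω}).toReal (μ {ω | J ω ≤ (j : ℤ) + 1}).toReal)
      = 0.5 * (∑' j : ℕ,
          (1 - |(μ {ω | k + ((j : ℤ) + 2) * L < τ ω}).toReal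
                + (μ {ω | k + ((j : ℤ) + 1) * L < τ ω}).toReal - 1|))
        + 0.5 * (μ {ω | k + L < τ ω}).toReal := by
  have hL0 : 0 < L := by omega
  set a : ℕ → ℝ := fun j => (μ {ω | k + ((j : ℤ) + 1) * L < τ ω}).toReal with ha
  have hshift (j : ℕ) : a (j + 1) = (μ {ω | k + ((j : ℤ) + 2) * L < τ ω}).toReal := by
    simp only [ha]; push_cast; ring_nf
  have hupper (j : ℕ) : {ω | (j : ℤ) + 1 ≤ J ω} = {ω | k + ((j : ℤ) + 1) * L < τ ω} := by
    ext ω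
    simp only [Set.mem_ofPred_eq, hJ ω, le_max_zero_ceil_iff hL0 (by omega : (1 : ℤ) ≤ j + 1)]
  have hlower (j : ℕ) : (μ {ω | J ω ≤ (j : ℤ) + 1}).toReal = 1 - a (j + 1) := by
    have hset : {ω | J ω ≤ (j : ℤ) + 1} = {ω | k + ((j : ℤ) + 2) * L < τ ω}ᶜ := by
      ext ω
      simp only [Set.mem_ofPred_eq, Set.mem_compl_iff, not_lt, hJ ω,
        max_zero_ceil_le_iff hL0 (by omega : (0 : ℤ) ≤ j + 1)]
      ring_nf
    rw [hset, prob_compl_eq_one_sub (measurableSet_lt measurable_const hτmeas),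
      ENNReal.toReal_sub_of_le prob_le_one ENNReal.one_ne_top, ENNReal.toReal_one, hshift]
  have hsum : Summable a := by
    simpa only [hupper] using
      summable_measure_add_one_le hJint fun ω => (hJ ω).symm ▸ le_max_left _ _
  simp only [hupper, hlower, ← hshift]
  rw [tsum_min_one_sub_succ hsum]
  simp only [ha, CharP.cast_eq_zero, zero_add, one_mul]

/-- Let `τ` be an integer-valued random variable with `τ ≥ L` almost surely,
where `L ≥ 1` and `k ≥ 0` are integers, and let `J = max{0, ⌈(τ − L − k)/L⌉}`.
If `E[J] < ∞` then
`B(J) = Σ_{j≥1} min{P(J ≥ j), P(J ≤ j)}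
      = 0.5·Σ_{j≥1} [1 − |P(τ > k+(j+1)L) + P(τ > k+jL) − 1|] + 0.5·P(τ > k+L)`. -/
theorem stmt_2 {Ω : Type*} [MeasurableSpace Ω] (μ : Measure Ω) [IsProbabilityMeasure μ]
    (τ : Ω → ℤ) (hτmeas : Measurable τ)
    (L k : ℤ) (hL : 1 ≤ L) (hk : 0 ≤ k)
    (hτL : ∀ᵐ ω ∂μ, L ≤ τ ω)
    (J : Ω → ℤ)
    (hJ : ∀ ω, J ω = max 0 ⌈((τ ω : ℝ) - (L : ℝ) - (k : ℝ)) / (L : ℝ)⌉)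
    (hJint : Integrable (fun ω => (J ω : ℝ)) μ) :
    (∑' j : ℕ, min (μ {ω | (j : ℤ) + 1 ≤ J ω}).toReal (μ {ω | J ω ≤ (j : ℤ) + 1}).toReal)
      = 0.5 * (∑' j : ℕ,
          (1 - |(μ {ω | k + ((j : ℤ) + 2) * L < τ ω}).toReal
                + (μ {ω | k + ((j : ℤ) + 1) * L < τ ω}).toReal - 1|))
        + 0.5 * (μ {ω | k + L < τ ω}).toReal :=
  stmt_2_general μ τ hτmeas L k hL J hJ hJint
end

section
/- Let J be a random variable taking values in the nonnegative integers with E[J] < ∞, and write p_j = P(J = j). Then B(J) = E[J] if and only if 2·p_0 ≥ 1 − p_1, where B(J) = Σ_{j≥1} min{P(J ≥ j), P(J ≤ j)}. -/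
open MeasureTheory ProbabilityTheory

open scoped ENNReal

/-!
By the layer-cake formula `E[J] = Σ_{j ≥ 0} P(J > j)`, so `B(J) ≤ E[J]` termwise. Since
`P(J > j)` decreases and `P(J ≤ j + 1)` increases in `j`, every minimum equals `P(J > j)` as
soon as the first one does, i.e. iff `1 - p₀ = P(J > 0) ≤ P(J ≤ 1) = p₀ + p₁`; otherwise the
first term of `B(J)` is strictly smaller and `B(J) < E[J]`.
-/

theorem tsum_min_eq_tsum_iff {f g : ℕ → ℝ} (hf : Antitone f) (hg : Monotone g)
    (hf₀ : 0 ≤ f) (hg₀ : 0 ≤ g 0) (hsum : Summable f) :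
    ∑' n, min (f n) (g n) = ∑' n, f n ↔ f 0 ≤ g 0 := by
  refine ⟨fun h => ?_, fun h => tsum_congr fun n =>
    min_eq_left ((hf n.zero_le).trans (h.trans (hg n.zero_le)))⟩
  by_contra! h0
  have hmin₀ : ∀ n, 0 ≤ min (f n) (g n) := fun n => le_min (hf₀ n) (hg₀.trans (hg n.zero_le))
  refine h.not_lt (hsum.of_nonneg_of_le hmin₀ (fun n => min_le_left _ _) |>.tsum_lt_tsum
    (fun n => min_le_left _ _) (i := 0) ?_ hsum)
  simpa using h0

theorem natCast_eq_tsum_ite_lt (k : ℕ) : (k : ℝ≥0∞) = ∑' n : ℕ, if n < k then 1 else 0 := by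
  rw [tsum_eq_sum (s := Finset.range k) (by simp_all),
    Finset.sum_ite_of_true fun n hn => Finset.mem_range.1 hn]
  simp

section

variable {Ω : Type*} [MeasurableSpace Ω] {μ : Measure Ω} {J : Ω → ℕ}

theorem lintegral_natCast_eq_tsum_measure_lt (hJ : Measurable J) :
    ∫⁻ ω, (J ω : ℝ≥0∞) ∂μ = ∑' n : ℕ, μ {ω | n < J ω} := by
  have hmeas : ∀ n : ℕ, MeasurableSet {ω | n < J ω} := fun n => hJ measurableSet_Ioi
  simp_rw [natCast_eq_tsum_ite_lt]
  rw [lintegral_tsum fun n => (measurable_const.ite (hmeas n) measurable_const).aemeasurable]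
  refine tsum_congr fun n => ?_
  rw [← lintegral_indicator_one (hmeas n)]
  simp only [Set.indicator_apply, Set.mem_ofPred_eq, Pi.one_apply]

theorem hasSum_measureReal_lt_integral (hJ : Measurable J)
    (hJint : Integrable (fun ω => (J ω : ℝ)) μ) :
    HasSum (fun n : ℕ => μ.real {ω | n < J ω}) (∫ ω, (J ω : ℝ) ∂μ) := by
  have hfin : ∑' n : ℕ, μ {ω | n < J ω} ≠ ∞ := by
    rw [← lintegral_natCast_eq_tsum_measure_lt hJ]
    simpa using hJint.hasFiniteIntegral.ne
  rw [integral_eq_lintegral_of_nonneg_ae (.of_forall fun ω => by positivity)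
    hJint.aestronglyMeasurable]
  simp_rw [ENNReal.ofReal_natCast, lintegral_natCast_eq_tsum_measure_lt hJ,
    ENNReal.tsum_toReal_eq (ENNReal.ne_top_of_tsum_ne_top hfin)]
  exact ENNReal.hasSum_toReal hfin

theorem probReal_zero_lt_eq_one_sub (hJ : Measurable J) [IsProbabilityMeasure μ] :
    μ.real {ω | 0 < J ω} = 1 - μ.real {ω | J ω = 0} := by
  have h₀ : MeasurableSet {ω | J ω = 0} := hJ (measurableSet_singleton 0)
  rw [← probReal_compl_eq_one_sub h₀]
  congr 1; ext ω; simp [Nat.pos_iff_ne_zero]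

theorem measureReal_le_one_eq_add (hJ : Measurable J) [IsFiniteMeasure μ] :
    μ.real {ω | J ω ≤ 1} = μ.real {ω | J ω = 0} + μ.real {ω | J ω = 1} := by
  have h₁ : MeasurableSet {ω | J ω = 1} := hJ (measurableSet_singleton 1)
  rw [← measureReal_union _ h₁]
  · congr 1; ext ω; simp [Nat.le_one_iff_eq_zero_or_eq_one]
  · exact Set.disjoint_left.2 fun ω h0 h1 => by simp_all

theorem antitone_measureReal_lt [IsFiniteMeasure μ] :
    Antitone fun n : ℕ => μ.real {ω | n < J ω} :=
  fun _ _ h => measureReal_mono fun _ hω => h.trans_lt hω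

theorem monotone_measureReal_le [IsFiniteMeasure μ] :
    Monotone fun n : ℕ => μ.real {ω | J ω ≤ n} :=
  fun _ _ h => measureReal_mono fun _ hω => le_trans hω h

end

/-- Let `J` be a nonnegative-integer-valued random variable with finite
expectation and `p_j = P(J = j)`.  Then
`B(J) = Σ_{j≥1} min{P(J ≥ j), P(J ≤ j)} = E[J]` if and only if `2·p_0 ≥ 1 − p_1`. -/
theorem stmt_4 {Ω : Type*} [MeasurableSpace Ω] (μ : Measure Ω) [IsProbabilityMeasure μ]
    (J : Ω → ℕ) (hJmeas : Measurable J)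
    (hJint : Integrable (fun ω => (J ω : ℝ)) μ) :
    (∑' j : ℕ, min (μ {ω | j + 1 ≤ J ω}).toReal (μ {ω | J ω ≤ j + 1}).toReal)
        = ∫ ω, (J ω : ℝ) ∂μ
      ↔ 2 * (μ {ω | J ω = 0}).toReal ≥ 1 - (μ {ω | J ω = 1}).toReal := by
  have hJ := hasSum_measureReal_lt_integral hJmeas hJint
  change ∑' j : ℕ, min (μ.real {ω | j < J ω}) (μ.real {ω | J ω ≤ j + 1}) = _ ↔
    2 * μ.real {ω | J ω = 0} ≥ 1 - μ.real {ω | J ω = 1}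
  rw [← hJ.tsum_eq, tsum_min_eq_tsum_iff
    antitone_measureReal_lt (fun _ _ h => monotone_measureReal_le (Nat.add_le_add_right h 1))
    (fun n => measureReal_nonneg) measureReal_nonneg hJ.summable,
    probReal_zero_lt_eq_one_sub hJmeas, zero_add, measureReal_le_one_eq_add hJmeas]
  constructor <;> intro h <;> linarith
end

section
/- Let J be a random variable taking values in the nonnegative integers with E[J] < ∞, and let m be the smallest integer median of J. If B(J) = E[J], where B(J) = Σ_{j≥1} min{P(J ≥ j), P(J ≤ j)}, then m ≤ 1. -/
open MeasureTheory ProbabilityTheory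

/-!
Since `E[J] = Σ_{j ≥ 0} P(J > j)` and each term of `B(J)` is at most the corresponding term of
this series, `B(J) = E[J]` forces equality termwise; for `j = 0` this reads
`P(J ≥ 1) ≤ P(J ≤ 1)`. Then `1` is a median when `P(J ≥ 1) ≥ 1/2`, and `0` is one
otherwise.
-/

lemma le_of_tsum_min_eq_tsum {ι : Type*} {a b : ι → ℝ} (ha₀ : 0 ≤ a) (hb₀ : 0 ≤ b)
    (ha : Summable a) (h : ∑' i, min (a i) (b i) = ∑' i, a i) (i : ι) : a i ≤ b i := by
  by_contra! hlt
  have hmin : Summable fun i => min (a i) (b i) :=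
    ha.of_nonneg_of_le (fun i => le_min (ha₀ i) (hb₀ i)) fun i => min_le_left _ _
  exact h.not_lt <| hmin.tsum_lt_tsum (fun i => min_le_left _ _) (min_lt_of_right_lt hlt) ha

lemma ENNReal.natCast_eq_tsum_ite (n : ℕ) :
    (n : ENNReal) = ∑' j : ℕ, if j < n then 1 else 0 := by
  rw [tsum_eq_sum (s := Finset.range n) fun j hj => by simpa using hj,
    Finset.sum_congr rfl fun j hj => if_pos (Finset.mem_range.mp hj)]
  simp

section

variable {Ω : Type*} [MeasurableSpace Ω] (μ : Measure Ω)

lemma lintegral_natCast_eq_tsum {J : Ω → ℕ} (hJ : Measurable J) :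
    ∫⁻ ω, (J ω : ENNReal) ∂μ = ∑' j : ℕ, μ {ω | j < J ω} := by
  have hmeas (j : ℕ) : MeasurableSet {ω | j < J ω} := hJ measurableSet_Ioi
  calc ∫⁻ ω, (J ω : ENNReal) ∂μ
      = ∫⁻ ω, ∑' j : ℕ, {ω | j < J ω}.indicator 1 ω ∂μ := by
        refine lintegral_congr fun ω => ?_
        rw [ENNReal.natCast_eq_tsum_ite]
        simp [Set.indicator_apply]
    _ = ∑' j : ℕ, μ {ω | j < J ω} := by
        rw [lintegral_tsum fun j => (measurable_one.indicator (hmeas j)).aemeasurable]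
        simp [lintegral_indicator_one (hmeas _)]

lemma hasSum_toReal_measure_lt_integral_natCast {J : Ω → ℕ} (hJ : Measurable J)
    (hint : Integrable (fun ω => (J ω : ℝ)) μ) :
    HasSum (fun j : ℕ => (μ {ω | j < J ω}).toReal) (∫ ω, (J ω : ℝ) ∂μ) := by
  have hlint : ∫⁻ ω, ENNReal.ofReal (J ω : ℝ) ∂μ = ∑' j : ℕ, μ {ω | j < J ω} := by
    simp only [ENNReal.ofReal_natCast, lintegral_natCast_eq_tsum μ hJ]
  rw [integral_eq_lintegral_of_nonneg_ae (.of_forall fun ω => by positivity)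
    hint.aestronglyMeasurable, hlint]
  have hfin : ∑' j : ℕ, μ {ω | j < J ω} ≠ ⊤ := (hlint ▸ hint.lintegral_lt_top).ne
  rw [ENNReal.tsum_toReal_eq (ENNReal.ne_top_of_tsum_ne_top hfin)]
  exact (ENNReal.summable_toReal hfin).hasSum

lemma exists_median_le_one_of_toReal_measure_le [IsProbabilityMeasure μ] {J : Ω → ℕ}
    (hJ : Measurable J)
    (h : (μ {ω | 1 ≤ J ω}).toReal ≤ (μ {ω | J ω ≤ 1}).toReal) :
    ∃ n ≤ 1, (μ {ω | J ω ≤ n}).toReal ≥ 1 / 2 ∧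
      (μ {ω | n ≤ J ω}).toReal ≥ 1 / 2 := by
  by_cases hpos : 1 / 2 ≤ (μ {ω | 1 ≤ J ω}).toReal
  · exact ⟨1, le_rfl, hpos.trans h, hpos⟩
  · refine ⟨0, zero_le_one, ?_, by norm_num⟩
    have hcompl : {ω | J ω ≤ 0}ᶜ = {ω | 1 ≤ J ω} := by ext; simp [Nat.one_le_iff_ne_zero]
    have hzero : MeasurableSet {ω | J ω ≤ 0} := hJ measurableSet_Iic
    have hsplit := probReal_compl_eq_one_sub (μ := μ) hzero
    rw [hcompl] at hsplit
    simp only [measureReal_def] at hsplit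
    linarith

end

/-- Let `J` be a nonnegative-integer-valued random variable with finite
expectation and let `m` be the smallest integer median of `J`.  If
`B(J) = Σ_{j≥1} min{P(J ≥ j), P(J ≤ j)} = E[J]`, then `m ≤ 1`. -/
theorem stmt_6 {Ω : Type*} [MeasurableSpace Ω] (μ : Measure Ω) [IsProbabilityMeasure μ]
    (J : Ω → ℕ) (hJmeas : Measurable J)
    (hJint : Integrable (fun ω => (J ω : ℝ)) μ)
    (m : ℕ)
    (hm : IsLeast {n : ℕ | (μ {ω | J ω ≤ n}).toReal ≥ 1 / 2 ∧
            (μ {ω | n ≤ J ω}).toReal ≥ 1 / 2} m)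
    (hB : (∑' j : ℕ, min (μ {ω | j + 1 ≤ J ω}).toReal (μ {ω | J ω ≤ j + 1}).toReal)
            = ∫ ω, (J ω : ℝ) ∂μ) :
    m ≤ 1 := by
  have hmean := hasSum_toReal_measure_lt_integral_natCast μ hJmeas hJint
  -- `j + 1 ≤ J ω` and `j < J ω` are definitionally equal on `ℕ`.
  have htail : (μ {ω | 1 ≤ J ω}).toReal ≤ (μ {ω | J ω ≤ 1}).toReal :=
    le_of_tsum_min_eq_tsum (fun _ => ENNReal.toReal_nonneg) (fun _ => ENNReal.toReal_nonneg)
      hmean.summable (hB.trans hmean.tsum_eq.symm) 0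
  obtain ⟨n, hn, hmedian⟩ := exists_median_le_one_of_toReal_measure_le μ hJmeas htail
  exact (hm.2 hmedian).trans hn
end

section
/- Let J be a random variable taking values in the nonnegative integers with E[J] < ∞, and for j ≥ 1 set S_j = P(J > j) + 0.5·P(J = j). Then Σ_{j≥1} min{S_j, 1 − S_j} + 0.5·P(J > 0) = Σ_{j≥1} min{P(J ≥ j), P(J ≤ j)}. -/
/-!
Pointwise, `P(J ≥ j) = S_j + P(J = j)/2` and `P(J ≤ j) = (1 - S_j) + P(J = j)/2`, so the `j`-th
term on the right exceeds the `j`-th term on the left by exactly `P(J = j)/2`, and these excesses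
sum to `P(J > 0)/2`. Finite expectation is what makes the right-hand series converge:
`Σ_j P(J > j) = E[J]`.
-/

open MeasureTheory ProbabilityTheory
open scoped ENNReal
open Function

lemma tsum_ite_lt_eq_natCast (k : ℕ) : ∑' n : ℕ, (if n < k then (1 : ℝ≥0∞) else 0) = k := by
  rw [tsum_eq_sum (s := Finset.range k) (fun n hn => by simpa using hn),
    Finset.sum_ite_of_true (fun n hn => Finset.mem_range.1 hn)]
  simp

lemma min_add_one_sub_eq_min_add_half (a b : ℝ) :
    min (a + b) (1 - a) = min (a + 0.5 * b) (1 - (a + 0.5 * b)) + 0.5 * b := by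
  rw [← min_add_add_right]
  congr 1 <;> ring

section

variable {Ω : Type*} [MeasurableSpace Ω] {μ : Measure Ω} {J : Ω → ℕ}

theorem tsum_measure_lt_eq_lintegral (hJ : Measurable J) :
    ∑' n : ℕ, μ {ω | n < J ω} = ∫⁻ ω, (J ω : ℝ≥0∞) ∂μ := by
  have hmeas (n : ℕ) : MeasurableSet {ω | n < J ω} := hJ measurableSet_Ioi
  calc ∑' n : ℕ, μ {ω | n < J ω}
      = ∑' n : ℕ, ∫⁻ ω, {ω | n < J ω}.indicator 1 ω ∂μ := by
        simp only [lintegral_indicator_one (hmeas _)]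
    _ = ∫⁻ ω, ∑' n : ℕ, {ω | n < J ω}.indicator 1 ω ∂μ :=
        (lintegral_tsum fun n => (measurable_one.indicator (hmeas n)).aemeasurable).symm
    _ = ∫⁻ ω, (J ω : ℝ≥0∞) ∂μ := by
        simp only [Set.indicator_apply, Set.mem_ofPred_eq, Pi.one_apply, tsum_ite_lt_eq_natCast]

theorem summable_toReal_measure_lt (hJ : Measurable J)
    (hJint : Integrable (fun ω => (J ω : ℝ)) μ) :
    Summable fun n : ℕ => (μ {ω | n < J ω}).toReal := by
  refine ENNReal.summable_toReal ?_
  rw [tsum_measure_lt_eq_lintegral hJ]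
  simpa [HasFiniteIntegral, Real.enorm_natCast] using hJint.hasFiniteIntegral.ne

theorem hasSum_toReal_measure_eq_succ [IsFiniteMeasure μ] (hJ : Measurable J) :
    HasSum (fun j : ℕ => (μ {ω | J ω = j + 1}).toReal) (μ {ω | 0 < J ω}).toReal := by
  have hmeas (j : ℕ) : MeasurableSet {ω | J ω = j + 1} := hJ (measurableSet_singleton _)
  have hdisj : Pairwise (Disjoint on fun j : ℕ => {ω | J ω = j + 1}) := fun i j hij =>
    Set.disjoint_left.2 fun _ hi hj => hij (Nat.succ_injective (hi.symm.trans hj))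
  have hunion : {ω | 0 < J ω} = ⋃ j : ℕ, {ω | J ω = j + 1} := by
    ext ω
    simp only [Set.mem_ofPred_eq, Set.mem_iUnion]
    exact ⟨fun h => ⟨J ω - 1, by omega⟩, fun ⟨j, hj⟩ => by omega⟩
  rw [hunion, measure_iUnion hdisj hmeas, ENNReal.tsum_toReal_eq fun _ => measure_ne_top _ _]
  exact (summable_measure_toReal hmeas hdisj).hasSum

theorem toReal_measure_le_eq_add [IsFiniteMeasure μ] (hJ : Measurable J) (j : ℕ) :
    (μ {ω | j ≤ J ω}).toReal = (μ {ω | j < J ω}).toReal + (μ {ω | J ω = j}).toReal := by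
  have hsplit : {ω | j ≤ J ω} = {ω | j < J ω} ∪ {ω | J ω = j} := by
    ext ω
    simp only [Set.mem_ofPred_eq, Set.mem_union]
    omega
  have hdisj : Disjoint {ω | j < J ω} {ω | J ω = j} :=
    Set.disjoint_left.2 fun _ hlt heq => (ne_of_gt hlt) heq
  rw [hsplit, measure_union hdisj (hJ (measurableSet_singleton _)),
    ENNReal.toReal_add (measure_ne_top _ _) (measure_ne_top _ _)]

theorem toReal_measure_le_eq_one_sub [IsProbabilityMeasure μ] (hJ : Measurable J) (j : ℕ) :
    (μ {ω | J ω ≤ j}).toReal = 1 - (μ {ω | j < J ω}).toReal := by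
  have hmeas : MeasurableSet {ω | j < J ω} := hJ measurableSet_Ioi
  have hcompl : {ω | J ω ≤ j} = {ω | j < J ω}ᶜ := by
    ext ω
    simp
  rw [hcompl, prob_compl_eq_one_sub hmeas, ENNReal.toReal_sub_of_le prob_le_one
    ENNReal.one_ne_top, ENNReal.toReal_one]

end

/-- Let `J` be a nonnegative-integer-valued random variable with finite
expectation and, for `j ≥ 1`, let `S_j = P(J > j) + 0.5·P(J = j)`.  Then
`Σ_{j≥1} min{S_j, 1 − S_j} + 0.5·P(J > 0) = Σ_{j≥1} min{P(J ≥ j), P(J ≤ j)}`. -/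
theorem stmt_7 {Ω : Type*} [MeasurableSpace Ω] (μ : Measure Ω) [IsProbabilityMeasure μ]
    (J : Ω → ℕ) (hJmeas : Measurable J)
    (hJint : Integrable (fun ω => (J ω : ℝ)) μ)
    (S : ℕ → ℝ)
    (hS : ∀ j, 1 ≤ j →
      S j = (μ {ω | j < J ω}).toReal + 0.5 * (μ {ω | J ω = j}).toReal) :
    (∑' j : ℕ, min (S (j + 1)) (1 - S (j + 1))) + 0.5 * (μ {ω | 0 < J ω}).toReal
      = ∑' j : ℕ, min (μ {ω | j + 1 ≤ J ω}).toReal (μ {ω | J ω ≤ j + 1}).toReal := by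
  have hpoint (j : ℕ) : min (μ {ω | j + 1 ≤ J ω}).toReal (μ {ω | J ω ≤ j + 1}).toReal
      = min (S (j + 1)) (1 - S (j + 1)) + 0.5 * (μ {ω | J ω = j + 1}).toReal := by
    rw [toReal_measure_le_eq_add hJmeas, toReal_measure_le_eq_one_sub hJmeas,
      hS (j + 1) j.succ_pos, min_add_one_sub_eq_min_add_half]
  have hsummable : Summable fun j : ℕ =>
      min (μ {ω | j + 1 ≤ J ω}).toReal (μ {ω | J ω ≤ j + 1}).toReal :=
    (summable_toReal_measure_lt hJmeas hJint).of_nonneg_of_le (fun _ => by positivity)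
      fun _ => min_le_left _ _
  have hlhs := hsummable.hasSum.sub
    ((hasSum_toReal_measure_eq_succ (μ := μ) hJmeas).mul_left 0.5)
  simp only [hpoint, add_sub_cancel_right] at hlhs ⊢
  rw [hlhs.tsum_eq, sub_add_cancel]
end

section
/- Let 0 < p < 1, q = 1 − p, and let J be a nonnegative-integer-valued random variable with P(J > j) = q^{k+1+Lj} for every integer j ≥ 0, where L ≥ 1 and k ≥ 0 are integers. Suppose m ≥ 1 is the largest integer satisfying P(J ≥ m) ≥ P(J ≤ m). Then B(J) = Σ_{j=1}^{m} P(J ≤ j) + Σ_{j≥m+1} P(J ≥ j) = m − q^{k+1+L}·(1 − q^{mL} − q^{(m−1)L}) / (1 − q^L), where B(J) = Σ_{j≥1} min{P(J ≥ j), P(J ≤ j)}. -/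
open MeasureTheory ProbabilityTheory

/-!
Since `P(J ≥ j)` decreases and `P(J ≤ j)` increases in `j`, the minimum in `B(J)` is `P(J ≤ j)`
up to the last crossing index `m` and `P(J ≥ j)` after it. Both pieces are geometric sums, because
`P(J ≥ j + 1) = q^{k+1} (q^L)^j`.
-/

theorem tsum_min_eq_sum_add_tsum_of_isGreatest {u v : ℕ → ℝ} (hu : Antitone u) (hv : Monotone v)
    (hsum : Summable u) {m : ℕ} (hm : IsGreatest {n | u n ≥ v n} m) :
    ∑' j, min (u (j + 1)) (v (j + 1)) = ∑ j ∈ Finset.Icc 1 m, v j + ∑' i, u (m + 1 + i) := by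
  have head : ∀ j ≤ m, min (u j) (v j) = v j := fun j hj =>
    min_eq_right ((hv hj).trans (hm.1.trans (hu hj)))
  have tail : ∀ j, m < j → min (u j) (v j) = u j := fun j hj =>
    min_eq_left (lt_of_not_ge fun h => hj.not_ge (hm.2 h)).le
  have hsum_tail : Summable fun i => u (m + 1 + i) := by
    simpa only [add_comm] using (summable_nat_add_iff (m + 1)).mpr hsum
  have hsum_min : Summable fun j => min (u (j + 1)) (v (j + 1)) := by
    refine (summable_nat_add_iff m).mp (hsum_tail.congr fun i => ?_)
    rw [tail _ (by omega)]
    congr 1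
    omega
  rw [← hsum_min.sum_add_tsum_nat_add m]
  congr 1
  · rw [← Finset.Ico_add_one_right_eq_Icc, Finset.sum_Ico_eq_sum_range, Nat.add_sub_cancel]
    refine Finset.sum_congr rfl fun j hj => ?_
    rw [head _ (by simp at hj; omega), add_comm]
  · refine tsum_congr fun i => ?_
    rw [tail _ (by omega)]
    congr 1
    omega

theorem sum_Icc_one_sub_geom_add_tsum_geom (c : ℝ) {r : ℝ} (hr : |r| < 1) {m : ℕ} (hm : 1 ≤ m) :
    ∑ j ∈ Finset.Icc 1 m, (1 - c * r ^ j) + ∑' i, c * r ^ (m + i)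
      = m - c * r * (1 - r ^ m - r ^ (m - 1)) / (1 - r) := by
  obtain ⟨n, rfl⟩ : ∃ n, m = n + 1 := ⟨m - 1, by omega⟩
  have hr1 : r ≠ 1 := fun h => by simp [h] at hr
  have hsub : r - 1 ≠ 0 := sub_ne_zero.mpr hr1
  have hsub' : 1 - r ≠ 0 := sub_ne_zero.mpr hr1.symm
  have hgeom : ∑ j ∈ Finset.Icc 1 (n + 1), r ^ j = (r ^ (n + 1 + 1) - r) / (r - 1) := by
    rw [← Finset.Ico_add_one_right_eq_Icc, geom_sum_Ico hr1 (by omega), pow_one]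
  have htsum : ∑' i, r ^ i = (1 - r)⁻¹ := tsum_geometric_of_norm_lt_one (by rwa [Real.norm_eq_abs])
  simp only [Finset.sum_sub_distrib, ← Finset.mul_sum, hgeom, pow_add, tsum_mul_left, htsum,
    Finset.sum_const, Nat.card_Icc, nsmul_eq_mul, mul_one, Nat.add_sub_cancel, Nat.cast_add,
    Nat.cast_one]
  field_simp
  ring

theorem toReal_measure_le_const_eq_one_sub {Ω : Type*} [MeasurableSpace Ω] {μ : Measure Ω}
    [IsProbabilityMeasure μ] {J : Ω → ℕ} (hJ : Measurable J) (j : ℕ) :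
    (μ {ω | J ω ≤ j}).toReal = 1 - (μ {ω | j < J ω}).toReal := by
  have hcompl : {ω | J ω ≤ j} = {ω | j < J ω}ᶜ := by ext; simp
  have hs : MeasurableSet {ω | j < J ω} := hJ measurableSet_Ioi
  rw [hcompl, ← measureReal_def, probReal_compl_eq_one_sub hs, measureReal_def]

theorem antitone_toReal_measure_ge_const {Ω α : Type*} [MeasurableSpace Ω] [Preorder α]
    (μ : Measure Ω) [IsFiniteMeasure μ] (J : Ω → α) : Antitone fun n => (μ {ω | n ≤ J ω}).toReal :=
  fun _ _ h => measureReal_mono fun _ hω => le_trans h hω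

theorem monotone_toReal_measure_le_const {Ω α : Type*} [MeasurableSpace Ω] [Preorder α]
    (μ : Measure Ω) [IsFiniteMeasure μ] (J : Ω → α) : Monotone fun n => (μ {ω | J ω ≤ n}).toReal :=
  fun _ _ h => measureReal_mono fun _ hω => le_trans hω h

/-- Let `0 < p < 1`, `q = 1 − p`, and let `J` be a nonnegative-integer-valued
random variable with `P(J > j) = q^{k+1+Lj}` for every `j ≥ 0`, where `L ≥ 1`, `k ≥ 0`.
Suppose `m ≥ 1` is the largest integer satisfying `P(J ≥ m) ≥ P(J ≤ m)`.  Then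
`B(J) = Σ_{j≥1} min{P(J ≥ j), P(J ≤ j)}
      = Σ_{j=1}^{m} P(J ≤ j) + Σ_{j≥m+1} P(J ≥ j)
      = m − q^{k+1+L}·(1 − q^{mL} − q^{(m−1)L}) / (1 − q^L)`. -/
theorem stmt_16 {Ω : Type*} [MeasurableSpace Ω] (μ : Measure Ω) [IsProbabilityMeasure μ]
    (p q : ℝ) (hp0 : 0 < p) (hp1 : p < 1) (hq : q = 1 - p)
    (L k : ℕ) (hL : 1 ≤ L)
    (J : Ω → ℕ) (hJmeas : Measurable J)
    (hJ : ∀ j : ℕ, (μ {ω | j < J ω}).toReal = q ^ (k + 1 + L * j))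
    (m : ℕ) (hm1 : 1 ≤ m)
    (hm : IsGreatest {n : ℕ | (μ {ω | n ≤ J ω}).toReal ≥ (μ {ω | J ω ≤ n}).toReal} m) :
    (∑' j : ℕ, min (μ {ω | j + 1 ≤ J ω}).toReal (μ {ω | J ω ≤ j + 1}).toReal)
        = (∑ j ∈ Finset.Icc 1 m, (μ {ω | J ω ≤ j}).toReal)
          + (∑' i : ℕ, (μ {ω | m + 1 + i ≤ J ω}).toReal)
      ∧ (∑ j ∈ Finset.Icc 1 m, (μ {ω | J ω ≤ j}).toReal)
          + (∑' i : ℕ, (μ {ω | m + 1 + i ≤ J ω}).toReal)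
        = (m : ℝ) - q ^ (k + 1 + L) * (1 - q ^ (m * L) - q ^ ((m - 1) * L)) / (1 - q ^ L) := by
  have hq0 : 0 < q := by linarith
  have hq1 : q < 1 := by linarith
  have hr : |q ^ L| < 1 := by
    rw [abs_of_pos (by positivity)]
    exact pow_lt_one₀ hq0.le hq1 (by omega)
  have hgt : ∀ j, (μ {ω | j < J ω}).toReal = q ^ (k + 1) * (q ^ L) ^ j := fun j => by
    rw [hJ, ← pow_mul, ← pow_add]
  have hle : ∀ j, (μ {ω | J ω ≤ j}).toReal = 1 - q ^ (k + 1) * (q ^ L) ^ j := fun j => by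
    rw [toReal_measure_le_const_eq_one_sub hJmeas, hgt]
  have htail : ∀ i, (μ {ω | m + 1 + i ≤ J ω}).toReal = q ^ (k + 1) * (q ^ L) ^ (m + i) :=
    fun i => by rw [← hgt, add_right_comm]; rfl
  have hsum : Summable fun n => (μ {ω | n ≤ J ω}).toReal :=
    (summable_nat_add_iff 1).mp <|
      ((summable_geometric_of_abs_lt_one hr).mul_left _).congr fun j => (hgt j).symm
  refine ⟨tsum_min_eq_sum_add_tsum_of_isGreatest (antitone_toReal_measure_ge_const μ J)
    (monotone_toReal_measure_le_const μ J) hsum hm, ?_⟩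
  simp only [hle, htail]
  rw [sum_Icc_one_sub_geom_add_tsum_geom _ hr hm1, ← pow_add, ← pow_mul, ← pow_mul, mul_comm L m,
    mul_comm L (m - 1)]
end
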